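/- arXiv:1201.3441 — 2 statements merged into one kernel-verified Lean document; each statement's English description precedes it below -/
import Mathlib

section
/- Let p₁, …, p_s be pairwise distinct primes. Then the variety 𝔏_{p₁,…,p_s} = var(N_{0,p₁}, …, N_{0,p_s}) is graph-determined: for all finite rings R, S ∈ 𝔏_{p₁,…,p_s}, if Γ(R) ≅ Γ(S) then R ≅ S. -/
/-- An element of a ring is a (one-sided or two-sided) zero-divisor: it is nonzero and
kills some nonzero element on the left or on the right. -/
def IsZD {R : Type*} [NonUnitalNonAssocRing R] (x : R) : Prop :=
  x ≠ 0 ∧ ∃ y : R, y ≠ 0 ∧ (x * y = 0 ∨ y * x = 0)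

/-- The zero-divisor graph `Γ(R)` of a ring `R`: vertices are the nonzero zero-divisors,
and distinct vertices `x`, `y` are adjacent iff `x*y = 0` or `y*x = 0`. -/
def zdvGraph (R : Type*) [NonUnitalNonAssocRing R] :
    SimpleGraph {x : R // IsZD x} where
  Adj a b := a ≠ b ∧ ((a : R) * (b : R) = 0 ∨ (b : R) * (a : R) = 0)
  symm := by
    refine ⟨?_⟩
    rintro a b ⟨hne, h⟩
    exact ⟨hne.symm, h.symm⟩
  loopless := by
    refine ⟨?_⟩
    rintro a ⟨hne, -⟩
    exact hne rfl

/-- A variety of (associative, not necessarily unital or commutative) rings: a class of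
rings closed under isomorphisms, subrings, homomorphic images and arbitrary products. -/
structure RingVariety : Type 1 where
  mem : ∀ (R : Type) [NonUnitalRing R], Prop
  closed_iso : ∀ (R S : Type) [NonUnitalRing R] [NonUnitalRing S],
    (R ≃+* S) → mem R → mem S
  closed_subring : ∀ (R : Type) [NonUnitalRing R] (S : NonUnitalSubring R),
    mem R → mem S
  closed_image : ∀ (R S : Type) [NonUnitalRing R] [NonUnitalRing S] (f : R →ₙ+* S),
    Function.Surjective f → mem R → mem S
  closed_prod : ∀ (ι : Type) (R : ι → Type) [∀ i, NonUnitalRing (R i)],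
    (∀ i, mem (R i)) → mem (∀ i, R i)

/-- A variety is graph-determined if any two finite rings in it with isomorphic
zero-divisor graphs are isomorphic. -/
def GraphDetermined (M : RingVariety) : Prop :=
  ∀ (R S : Type) [NonUnitalRing R] [NonUnitalRing S], Finite R → Finite S →
    M.mem R → M.mem S →
    Nonempty (zdvGraph R ≃g zdvGraph S) → Nonempty (R ≃+* S)

/-- The null ring on an abelian group `A`: all products are zero. -/
def NullRing (A : Type*) := A

instance {A : Type*} [AddCommGroup A] : NonUnitalRing (NullRing A) :=
  { (inferInstanceAs (AddCommGroup A) : AddCommGroup A) with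
    mul := fun _ _ => (0 : A)
    left_distrib := fun _ _ _ => (add_zero (0 : A)).symm
    right_distrib := fun _ _ _ => (add_zero (0 : A)).symm
    zero_mul := fun _ => rfl
    mul_zero := fun _ => rfl
    mul_assoc := fun _ _ _ => rfl }

/-- Membership in `𝔏_{p₁,…,p_s} = var(N_{0,p₁}, …, N_{0,p_s})`, the smallest variety
containing the null rings on `ℤ/pᵢℤ`: a ring belongs to it iff it belongs to every
variety containing all these null rings. -/
def MemVarNulls (s : ℕ) (ps : Fin s → ℕ) (R : Type) [NonUnitalRing R] : Prop :=
  ∀ N : RingVariety, (∀ i, N.mem (NullRing (ZMod (ps i)))) → N.mem R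

/-!
Every ring of `𝔏_{p₁,…,p_s}` has zero multiplication and additive exponent dividing
`p₁ ⋯ p_s`, since such rings form a variety containing the generators. In a null ring every
nonzero element is a zero-divisor, so `Γ(R)` has `|R| - 1` vertices and the graph determines
`|R|`. A finite abelian group of squarefree exponent is the direct sum of its `p`-torsion
subgroups, each an `𝔽_p`-vector space, so it is determined up to isomorphism by its order; and
an additive isomorphism of null rings is a ring isomorphism.
-/

theorem Nat.factorization_prod_pow_apply {ι : Type*} [Fintype ι] {q : ι → ℕ}
    (hq : ∀ i, (q i).Prime) (hinj : Function.Injective q) (d : ι → ℕ) (i : ι) :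
    (∏ j, q j ^ d j).factorization (q i) = d i := by
  rw [Nat.factorization_prod fun j _ => pow_ne_zero _ (hq j).ne_zero, Finset.sum_apply']
  simp only [(hq _).factorization_pow, Finsupp.single_apply]
  rw [Finset.sum_eq_single i (fun j _ hji => if_neg (hinj.ne hji)) (by simp), if_pos rfl]

section FiniteAbelianGroup

variable {M N : Type*} [AddCommGroup M] [AddCommGroup N]

theorem exists_addEquiv_fin_pi_zmod [Finite M] {p : ℕ} (hp : p.Prime)
    (hM : ∀ x : M, p • x = 0) : ∃ d : ℕ, Nonempty (M ≃+ (Fin d → ZMod p)) := by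
  have : Fact p.Prime := ⟨hp⟩
  have : Module (ZMod p) M := AddCommGroup.zmodModule hM
  exact ⟨_, ⟨(Module.finBasis (ZMod p) M).equivFun.toAddEquiv⟩⟩

theorem nonempty_addEquiv_of_card_eq_of_nsmul_prime_eq_zero [Finite M] [Finite N] {p : ℕ}
    (hp : p.Prime) (hM : ∀ x : M, p • x = 0) (hN : ∀ x : N, p • x = 0)
    (hcard : Nat.card M = Nat.card N) : Nonempty (M ≃+ N) := by
  obtain ⟨d, ⟨eM⟩⟩ := exists_addEquiv_fin_pi_zmod hp hM
  obtain ⟨d', ⟨eN⟩⟩ := exists_addEquiv_fin_pi_zmod hp hN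
  obtain rfl : d = d' := Nat.pow_right_injective hp.two_le <| by
    simpa [Nat.card_congr eM.toEquiv, Nat.card_congr eN.toEquiv, Nat.card_fun] using hcard
  exact ⟨eM.trans eN.symm⟩

theorem nsmul_torsionBy_eq_zero (n : ℕ) (x : Submodule.torsionBy ℤ M (n : ℤ)) :
    n • x = 0 := by
  simpa [Nat.cast_smul_eq_nsmul] using Submodule.smul_torsionBy (n : ℤ) x

theorem nonempty_addEquiv_pi_torsionBy {P : Finset ℕ} (hP : ∀ p ∈ P, p.Prime)
    (hM : ∀ x : M, (∏ p ∈ P, p) • x = 0) :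
    Nonempty (M ≃+ ∀ p : P, Submodule.torsionBy ℤ M (p : ℤ)) := by
  have hcoprime : (P : Set ℕ).Pairwise (Function.onFun IsCoprime fun p : ℕ => (p : ℤ)) :=
    fun p hp q hq hpq => Nat.isCoprime_iff_coprime.mpr <|
      (Nat.coprime_primes (hP p hp) (hP q hq)).mpr hpq
  have hTorsion : Module.IsTorsionBy ℤ M (∏ p ∈ P, (p : ℤ)) := fun x => by
    rw [← Nat.cast_prod, Nat.cast_smul_eq_nsmul]
    exact hM x
  exact ⟨(AddEquiv.ofBijective _ (Submodule.torsionBy_isInternal hcoprime hTorsion)).symm.trans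
    (DirectSum.linearEquivFunOnFintype ℤ P _).toAddEquiv⟩

theorem card_torsionBy_eq_pow_factorization [Finite M] {P : Finset ℕ} (hP : ∀ p ∈ P, p.Prime)
    (hM : ∀ x : M, (∏ p ∈ P, p) • x = 0) (p : P) :
    Nat.card (Submodule.torsionBy ℤ M (p : ℤ)) = p ^ (Nat.card M).factorization p := by
  obtain ⟨e⟩ := nonempty_addEquiv_pi_torsionBy hP hM
  have hcomponent (q : P) :
      ∃ d : ℕ, Nonempty (Submodule.torsionBy ℤ M (q : ℤ) ≃+ (Fin d → ZMod q)) :=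
    exists_addEquiv_fin_pi_zmod (hP q q.2) (nsmul_torsionBy_eq_zero _)
  choose d hd using hcomponent
  have hcard (q : P) : Nat.card (Submodule.torsionBy ℤ M (q : ℤ)) = q ^ d q := by
    rw [Nat.card_congr (hd q).some.toEquiv, Nat.card_fun, Nat.card_zmod, Nat.card_fin]
  have hcardM : Nat.card M = ∏ q : P, (q : ℕ) ^ d q := by
    rw [Nat.card_congr e.toEquiv, Nat.card_pi]
    exact Finset.prod_congr rfl fun q _ => hcard q
  rw [hcard, hcardM,
    Nat.factorization_prod_pow_apply (q := Subtype.val) (fun q => hP q q.2) Subtype.val_injective]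

theorem nonempty_addEquiv_of_card_eq_of_nsmul_prod_primes_eq_zero [Finite M] [Finite N]
    {P : Finset ℕ} (hP : ∀ p ∈ P, p.Prime) (hM : ∀ x : M, (∏ p ∈ P, p) • x = 0)
    (hN : ∀ x : N, (∏ p ∈ P, p) • x = 0) (hcard : Nat.card M = Nat.card N) :
    Nonempty (M ≃+ N) := by
  obtain ⟨eM⟩ := nonempty_addEquiv_pi_torsionBy hP hM
  obtain ⟨eN⟩ := nonempty_addEquiv_pi_torsionBy hP hN
  have hcomponent (p : P) :
      Nonempty (Submodule.torsionBy ℤ M (p : ℤ) ≃+ Submodule.torsionBy ℤ N (p : ℤ)) := by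
    refine nonempty_addEquiv_of_card_eq_of_nsmul_prime_eq_zero (hP p p.2)
      (nsmul_torsionBy_eq_zero _) (nsmul_torsionBy_eq_zero _) ?_
    rw [card_torsionBy_eq_pow_factorization hP hM, card_torsionBy_eq_pow_factorization hP hN,
      hcard]
  exact ⟨eM.trans ((AddEquiv.piCongrRight fun p => (hcomponent p).some).trans eN.symm)⟩

end FiniteAbelianGroup

def nullRingVariety (n : ℕ) : RingVariety where
  mem R _ := (∀ x y : R, x * y = 0) ∧ ∀ x : R, n • x = 0
  closed_iso _ _ _ _ e h :=
    ⟨fun x y => by simpa using congrArg e (h.1 (e.symm x) (e.symm y)),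
      fun x => by simpa using congrArg e (h.2 (e.symm x))⟩
  closed_subring _ _ _ h :=
    ⟨fun x y => Subtype.ext (h.1 x y), fun x => Subtype.ext (h.2 x)⟩
  closed_image _ _ _ _ f hf h := by
    refine ⟨fun x y => ?_, fun x => ?_⟩
    · obtain ⟨a, rfl⟩ := hf x
      obtain ⟨b, rfl⟩ := hf y
      rw [← map_mul, h.1, map_zero]
    · obtain ⟨a, rfl⟩ := hf x
      rw [← map_nsmul, h.2, map_zero]
  closed_prod _ _ _ h :=
    ⟨fun x y => funext fun i => (h i).1 _ _, fun x => funext fun i => (h i).2 _⟩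

theorem nullRingVariety_mem_nullRing_zmod {m n : ℕ} (h : m ∣ n) :
    (nullRingVariety n).mem (NullRing (ZMod m)) :=
  ⟨fun _ _ => rfl, fun (x : ZMod m) => show n • x = 0 by
    rw [nsmul_eq_mul, (ZMod.natCast_eq_zero_iff n m).2 h, zero_mul]⟩

theorem MemVarNulls.mem_nullRingVariety {s : ℕ} {ps : Fin s → ℕ} {R : Type} [NonUnitalRing R]
    (h : MemVarNulls s ps R) : (nullRingVariety (∏ p ∈ Finset.univ.image ps, p)).mem R :=
  h _ fun i => nullRingVariety_mem_nullRing_zmod <|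
    Finset.dvd_prod_of_mem _ (Finset.mem_image_of_mem ps (Finset.mem_univ i))

section ZeroDivisorGraph

variable {R S : Type*} [NonUnitalNonAssocRing R] [NonUnitalNonAssocRing S]

theorem isZD_iff_ne_zero (h : ∀ x y : R, x * y = 0) {x : R} : IsZD x ↔ x ≠ 0 :=
  ⟨And.left, fun hx => ⟨hx, x, hx, Or.inl (h x x)⟩⟩

theorem card_isZD_add_one [Finite R] (h : ∀ x y : R, x * y = 0) :
    Nat.card {x : R // IsZD x} + 1 = Nat.card R := by
  classical
  rw [Nat.card_congr (Equiv.subtypeEquivRight fun _ => isZD_iff_ne_zero h), ← Finite.card_option,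
    Nat.card_congr (Equiv.optionSubtypeNe 0)]

theorem card_eq_of_zdvGraph_iso [Finite R] [Finite S] (hR : ∀ x y : R, x * y = 0)
    (hS : ∀ x y : S, x * y = 0) (g : zdvGraph R ≃g zdvGraph S) : Nat.card R = Nat.card S := by
  rw [← card_isZD_add_one hR, ← card_isZD_add_one hS, Nat.card_congr g.toEquiv]

end ZeroDivisorGraph

theorem varNulls_graphDetermined_general (s : ℕ) (ps : Fin s → ℕ)
    (hprime : ∀ i, (ps i).Prime)
    (R S : Type) [NonUnitalRing R] [NonUnitalRing S] (hR : Finite R) (hS : Finite S)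
    (hmR : MemVarNulls s ps R) (hmS : MemVarNulls s ps S)
    (hiso : Nonempty (zdvGraph R ≃g zdvGraph S)) :
    Nonempty (R ≃+* S) := by
  obtain ⟨g⟩ := hiso
  obtain ⟨hRnull, hRexp⟩ := hmR.mem_nullRingVariety
  obtain ⟨hSnull, hSexp⟩ := hmS.mem_nullRingVariety
  have hP : ∀ p ∈ Finset.univ.image ps, p.Prime := by simpa using hprime
  obtain ⟨e⟩ := nonempty_addEquiv_of_card_eq_of_nsmul_prod_primes_eq_zero hP hRexp hSexp
    (card_eq_of_zdvGraph_iso hRnull hSnull g)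
  exact ⟨{ e with map_mul' := fun x y => by simp [hRnull, hSnull] }⟩

/-- For pairwise distinct primes `p₁, …, p_s`, the variety
`𝔏_{p₁,…,p_s} = var(N_{0,p₁}, …, N_{0,p_s})` is graph-determined. -/
theorem varNulls_graphDetermined (s : ℕ) (ps : Fin s → ℕ)
    (hprime : ∀ i, (ps i).Prime) (hdist : ∀ i j, i ≠ j → ps i ≠ ps j)
    (R S : Type) [NonUnitalRing R] [NonUnitalRing S] (hR : Finite R) (hS : Finite S)
    (hmR : MemVarNulls s ps R) (hmS : MemVarNulls s ps S)
    (hiso : Nonempty (zdvGraph R ≃g zdvGraph S)) :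
    Nonempty (R ≃+* S) :=
  varNulls_graphDetermined_general s ps hprime R S hR hS hmR hmS hiso
end

section
/- Let 𝔐 be a graph-determined variety of rings such that ℤ_p ∈ 𝔐 for some prime p. Then N_{p,p} does not belong to 𝔐. -/
/-- `N_{p,p}`: the ring of 3×3 matrices over `GF(p)` of the form
`[[0,a,b],[0,0,a],[0,0,0]]` with `a, b ∈ GF(p)`. -/
def Npp (p : ℕ) : NonUnitalSubring (Matrix (Fin 3) (Fin 3) (ZMod p)) where
  carrier := {M | M 0 0 = 0 ∧ M 1 0 = 0 ∧ M 1 1 = 0 ∧ M 2 0 = 0 ∧ M 2 1 = 0 ∧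
    M 2 2 = 0 ∧ M 1 2 = M 0 1}
  zero_mem' := ⟨rfl, rfl, rfl, rfl, rfl, rfl, rfl⟩
  add_mem' := by
    rintro M N ⟨h1, h2, h3, h4, h5, h6, h7⟩ ⟨g1, g2, g3, g4, g5, g6, g7⟩
    refine ⟨?_, ?_, ?_, ?_, ?_, ?_, ?_⟩ <;>
      simp [Matrix.add_apply, h1, h2, h3, h4, h5, h6, h7, g1, g2, g3, g4, g5, g6, g7]
  neg_mem' := by
    rintro M ⟨h1, h2, h3, h4, h5, h6, h7⟩
    refine ⟨?_, ?_, ?_, ?_, ?_, ?_, ?_⟩ <;>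
      simp [Matrix.neg_apply, h1, h2, h3, h4, h5, h6, h7]
  mul_mem' := by
    rintro M N ⟨h1, h2, h3, h4, h5, h6, h7⟩ ⟨g1, g2, g3, g4, g5, g6, g7⟩
    refine ⟨?_, ?_, ?_, ?_, ?_, ?_, ?_⟩ <;>
      simp [Matrix.mul_apply, Fin.sum_univ_three, h1, h2, h3, h4, h5, h6, h7,
        g1, g2, g3, g4, g5, g6, g7]

/-!
The map `x ↦ x₀₁` sends `N_{p,p}` onto the null ring `ℤ_p⁰` on `ℤ_p`, so the variety contains
`ℤ_p × ℤ_p⁰`. In both rings `xy = 0` exactly when one factor lies in a fixed subgroup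
(`x₀₁ = 0`, resp. first coordinate `0`), so `x ↦ (x₀₁, x₀₂)` is an isomorphism of zero-divisor
graphs. Yet the two rings are not isomorphic: `N_{p,p}` satisfies `xyz = 0`, while `(1, 0)` is a
nonzero idempotent of `ℤ_p × ℤ_p⁰`.
-/

open Function

namespace RingVariety

variable (M : RingVariety)

theorem mem_prod {R S : Type} [NonUnitalRing R] [NonUnitalRing S] (hR : M.mem R)
    (hS : M.mem S) : M.mem (R × S) := by
  let F : Bool → Type := fun b => cond b R S
  let _ : ∀ b, NonUnitalRing (F b)
    | true => ‹NonUnitalRing R›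
    | false => ‹NonUnitalRing S›
  let π : (∀ b, F b) →ₙ+* R × S :=
    { toFun := fun f => (f true, f false)
      map_zero' := rfl
      map_add' := fun _ _ => rfl
      map_mul' := fun _ _ => rfl }
  have hπ : Surjective π := fun x => ⟨fun | true => x.1 | false => x.2, rfl⟩
  exact M.closed_image _ _ π hπ (M.closed_prod Bool F fun | true => hR | false => hS)

theorem mem_nullRing_of_surjective {R A : Type} [NonUnitalRing R] [AddCommGroup A] (f : R →+ A)
    (hf : Surjective f) (hmul : ∀ x y, f (x * y) = 0) (hR : M.mem R) :
    M.mem (NullRing A) :=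
  M.closed_image R (NullRing A)
    { toFun := f, map_zero' := f.map_zero, map_add' := f.map_add, map_mul' := hmul } hf hR

end RingVariety

theorem NullRing.mul_eq_zero {A : Type*} [AddCommGroup A] (x y : NullRing A) : x * y = 0 := rfl

theorem Prod.mul_nullRing_eq_zero_iff {R A : Type*} [NonUnitalRing R] [NoZeroDivisors R]
    [AddCommGroup A] (x y : R × NullRing A) : x * y = 0 ↔ x.1 = 0 ∨ y.1 = 0 := by
  rw [Prod.ext_iff, Prod.fst_mul, Prod.snd_mul, Prod.fst_zero, Prod.snd_zero, _root_.mul_eq_zero]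
  exact and_iff_left (NullRing.mul_eq_zero _ _)

def zdvGraphIsoOfEquiv {R S : Type*} [NonUnitalNonAssocRing R] [NonUnitalNonAssocRing S]
    (e : R ≃ S) (he0 : e 0 = 0)
    (he : ∀ x y, (e x * e y = 0 ∨ e y * e x = 0) ↔ (x * y = 0 ∨ y * x = 0)) :
    zdvGraph R ≃g zdvGraph S where
  toEquiv := e.subtypeEquiv fun x => by
    have hne : ∀ x, e x ≠ 0 ↔ x ≠ 0 := fun x => by rw [← he0, e.injective.ne_iff]
    simp only [IsZD, e.surjective.exists, hne, he]
  map_rel_iff' {x y} := by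
    change _ ≠ _ ∧ _ ↔ _ ≠ _ ∧ _
    rw [(Equiv.injective _).ne_iff]
    exact and_congr_right' (he x y)

namespace Npp

variable {p : ℕ}

def ofEntries (a b : ZMod p) : Npp p :=
  ⟨!![0, a, b; 0, 0, a; 0, 0, 0], ⟨rfl, rfl, rfl, rfl, rfl, rfl, rfl⟩⟩

def entryEquiv : Npp p ≃ ZMod p × ZMod p where
  toFun x := (x.1 0 1, x.1 0 2)
  invFun ab := ofEntries ab.1 ab.2
  left_inv := by
    rintro ⟨x, h00, h10, h11, h20, h21, h22, h12⟩
    ext i j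
    fin_cases i <;> fin_cases j <;> simp [ofEntries, *]
  right_inv _ := rfl

theorem coe_mul_apply_zero_one (x y : Npp p) : (x * y).1 0 1 = 0 := by
  obtain ⟨x, h00, h10, h11, h20, h21, h22, h12⟩ := x
  obtain ⟨y, g00, g10, g11, g20, g21, g22, g12⟩ := y
  simp [Matrix.mul_apply, Fin.sum_univ_three, *]

theorem coe_mul_apply_zero_two (x y : Npp p) : (x * y).1 0 2 = x.1 0 1 * y.1 0 1 := by
  obtain ⟨x, h00, h10, h11, h20, h21, h22, h12⟩ := x
  obtain ⟨y, g00, g10, g11, g20, g21, g22, g12⟩ := y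
  simp [Matrix.mul_apply, Fin.sum_univ_three, *]

theorem entryEquiv_mul (x y : Npp p) :
    entryEquiv (x * y) = (0, x.1 0 1 * y.1 0 1) :=
  Prod.ext (coe_mul_apply_zero_one x y) (coe_mul_apply_zero_two x y)

theorem mul_mul_eq_zero (x y z : Npp p) : x * y * z = 0 :=
  entryEquiv.injective <| by
    rw [entryEquiv_mul, coe_mul_apply_zero_one, zero_mul]
    rfl

theorem mul_eq_zero_iff [Fact p.Prime] (x y : Npp p) :
    x * y = 0 ↔ x.1 0 1 = 0 ∨ y.1 0 1 = 0 := by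
  rw [← entryEquiv.injective.eq_iff, entryEquiv_mul, ← _root_.mul_eq_zero]
  exact ⟨fun h => congrArg Prod.snd h, fun h => Prod.ext rfl h⟩

def zdvGraphIsoProdNullRing [Fact p.Prime] :
    zdvGraph (Npp p) ≃g zdvGraph (ZMod p × NullRing (ZMod p)) :=
  zdvGraphIsoOfEquiv entryEquiv rfl fun x y => by
    simp only [Prod.mul_nullRing_eq_zero_iff, mul_eq_zero_iff]
    rfl

end Npp

/-- If `𝔐` is a graph-determined variety containing `ℤ_p` (`p` prime), then `N_{p,p}`
does not belong to `𝔐`. -/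
theorem Npp_not_mem_graphDetermined (M : RingVariety) (hgd : GraphDetermined M)
    (p : ℕ) (hp : p.Prime) (hZp : M.mem (ZMod p)) :
    ¬ M.mem (Npp p) := by
  have := Fact.mk hp
  intro hN
  have hNull : M.mem (NullRing (ZMod p)) :=
    M.mem_nullRing_of_surjective ((Matrix.entryAddMonoidHom _ 0 1).comp (Npp p).subtype)
      (fun a => ⟨Npp.ofEntries a 0, rfl⟩) Npp.coe_mul_apply_zero_one hN
  have hprod := M.mem_prod hZp hNull
  have hfin : Finite (ZMod p × NullRing (ZMod p)) := inferInstanceAs (Finite (ZMod p × ZMod p))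
  obtain ⟨φ⟩ := hgd _ _ inferInstance hfin hN hprod ⟨Npp.zdvGraphIsoProdNullRing⟩
  set u : ZMod p × NullRing (ZMod p) := (1, 0)
  have hu : u * u = u := Prod.ext (mul_one 1) (mul_zero 0)
  have h := Npp.mul_mul_eq_zero (φ.symm u) (φ.symm u) (φ.symm u)
  rw [← map_mul, ← map_mul, hu, hu, map_eq_zero_iff _ φ.symm.injective] at h
  exact one_ne_zero (congrArg Prod.fst h)
end
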